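/- arXiv:2407.12595 — 4 statements merged into one kernel-verified Lean document; each statement's English description precedes it below -/
import Mathlib

section
/- For a finite undirected simple graph G=(V,E) and an orientation Ḡ of G satisfying Invariant 2 (there is no improving path starting at any vertex of maximum out-degree), the maximum out-degree Δ of Ḡ is optimal; that is, every orientation of G has maximum out-degree at least Δ. -/
open Finset

/-- An orientation of a simple graph `G`: a choice, for each edge `{u,v}` of `G`,
of exactly one of the directed edges `(u,v)`, `(v,u)`. -/
structure GraphOrientation {V : Type*} (G : SimpleGraph V) where
  dir : V → V → Bool
  dir_adj : ∀ u v, dir u v = true → G.Adj u v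
  exactly_one : ∀ u v, G.Adj u v → (dir u v = true ↔ ¬ dir v u = true)

/-- Out-degree of `v` w.r.t. a directed-edge relation `d`. -/
def outDegF {V : Type*} [Fintype V] (d : V → V → Bool) (v : V) : ℕ :=
  (Finset.univ.filter fun w => d v w = true).card

/-- Out-degree of a vertex in an orientation. -/
def GraphOrientation.outDeg {V : Type*} [Fintype V] {G : SimpleGraph V}
    (o : GraphOrientation G) (v : V) : ℕ := outDegF o.dir v

/-- Maximum out-degree `Δ` of an orientation. -/
def GraphOrientation.maxOutDeg {V : Type*} [Fintype V] {G : SimpleGraph V}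
    (o : GraphOrientation G) : ℕ := Finset.univ.sup o.outDeg

/-- `|E(S)|`: the number of edges of `G` with both endpoints in `S`. -/
def edgeCount {V : Type*} [Fintype V] [DecidableEq V] (G : SimpleGraph V)
    [DecidableRel G.Adj] (S : Finset V) : ℕ :=
  (G.edgeFinset.filter fun e => ∀ x ∈ e, x ∈ S).card

/-- A directed path in an orientation: a list of distinct vertices, of length at
least two (i.e. `k ≥ 1` edges), with consecutive vertices joined by directed edges. -/
def IsDirPath {V : Type*} {G : SimpleGraph V} (o : GraphOrientation G) (p : List V) : Prop :=
  p.Nodup ∧ 2 ≤ p.length ∧ List.Chain' (fun a b => o.dir a b = true) p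

/-- A directed path from `a` to `b`. -/
def IsPathFrom {V : Type*} {G : SimpleGraph V} (o : GraphOrientation G)
    (p : List V) (a b : V) : Prop :=
  IsDirPath o p ∧ p.head? = some a ∧ p.getLast? = some b

/-- Invariant 1: there is no improving path between any two vertices, i.e. no directed
path `⟨a,…,b⟩` with `odeg(a) > odeg(b) + 1`. -/
def Invariant1 {V : Type*} [Fintype V] {G : SimpleGraph V} (o : GraphOrientation G) : Prop :=
  ∀ p a b, IsPathFrom o p a b → o.outDeg a ≤ o.outDeg b + 1

/-- Invariant 2: there is no improving path starting at a vertex of maximum out-degree. -/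
def Invariant2 {V : Type*} [Fintype V] {G : SimpleGraph V} (o : GraphOrientation G) : Prop :=
  ∀ p a b, IsPathFrom o p a b → o.outDeg a = o.maxOutDeg → o.outDeg a ≤ o.outDeg b + 1

/-- Flipping the directed path `p`: every directed edge `(v_i, v_{i+1})` of `p`
is replaced by the reversed edge `(v_{i+1}, v_i)`; all other edges are unchanged. -/
def flipDir {V : Type*} [DecidableEq V] (d : V → V → Bool) (p : List V) : V → V → Bool :=
  fun a b => if (a, b) ∈ p.zip p.tail ∨ (b, a) ∈ p.zip p.tail then d b a else d a b

/-- `G + {u,v}`: the graph obtained from `G` by inserting the edge `{u,v}`. -/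
def addE {V : Type*} (G : SimpleGraph V) (u v : V) : SimpleGraph V :=
  G ⊔ SimpleGraph.fromEdgeSet {s(u, v)}

/-- `G − {u,v}`: the graph obtained from `G` by deleting the edge `{u,v}`. -/
def delE {V : Type*} (G : SimpleGraph V) (u v : V) : SimpleGraph V :=
  G.deleteEdges {s(u, v)}

/-! Let `m` be a vertex of maximum out-degree `Δ` and `S` the set of vertices reachable from `m`.
By Invariant 2 every vertex of `S` has out-degree at least `Δ - 1`, and `m` has out-degree `Δ`, so
the out-degrees on `S` sum to more than `|S| (Δ - 1)`. No edge leaves `S`, so this sum counts the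
edges of `G` inside `S`, and any other orientation spreads those edges over `S` with out-degree sum
at most `|S| Δ'`. Hence `Δ - 1 < Δ'`. -/

namespace IsPathFrom

variable {V : Type*} {G : SimpleGraph V} {o : GraphOrientation G} {p : List V} {a b c : V}

lemma pair (h : o.dir a b = true) : IsPathFrom o [a, b] a b :=
  ⟨⟨by simp [(o.dir_adj a b h).ne], by simp, List.isChain_pair.2 h⟩, rfl, rfl⟩

lemma concat (hp : IsPathFrom o p a b) (hbc : o.dir b c = true) (hc : c ∉ p) :
    IsPathFrom o (p ++ [c]) a c := by
  obtain ⟨⟨hnd, hlen, hch⟩, hhead, hlast⟩ := hp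
  refine ⟨⟨hnd.append (List.nodup_singleton c) (by simpa using hc), by simp; omega, ?_⟩,
    ?_, List.getLast?_concat⟩
  · refine List.isChain_append.2 ⟨hch, List.isChain_singleton c, fun x hx y hy => ?_⟩
    rw [hlast, Option.mem_some_iff] at hx
    rw [List.head?_singleton, Option.mem_some_iff] at hy
    exact hx ▸ hy ▸ hbc
  · rwa [List.head?_append_of_ne_nil _ (List.ne_nil_of_length_pos (by omega))]

lemma exists_of_mem (hp : IsPathFrom o p a b) (hc : c ∈ p) (hca : c ≠ a) :
    ∃ q, IsPathFrom o q a c := by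
  obtain ⟨⟨hnd, -, hch⟩, hhead, -⟩ := hp
  obtain ⟨q, t, rfl⟩ := List.append_of_mem hc
  rcases q with _ | ⟨x, q⟩
  · simp_all
  · have hpre : x :: q ++ [c] <+: x :: q ++ c :: t := ⟨t, by simp⟩
    exact ⟨x :: q ++ [c], ⟨hnd.sublist hpre.sublist, by simp, hch.prefix hpre⟩,
      by simpa using hhead, List.getLast?_concat⟩

end IsPathFrom

lemma exists_isPathFrom_of_reflTransGen {V : Type*} {G : SimpleGraph V}
    {o : GraphOrientation G} {a b : V}
    (h : Relation.ReflTransGen (fun u v => o.dir u v = true) a b) :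
    b = a ∨ ∃ p, IsPathFrom o p a b := by
  induction h with
  | refl => exact .inl rfl
  | @tail b c _ hbc ih =>
    rcases ih with rfl | ⟨p, hp⟩
    · exact .inr ⟨_, .pair hbc⟩
    by_cases hc : c ∈ p
    · by_cases hca : c = a
      exacts [.inl hca, .inr (hp.exists_of_mem hc hca)]
    · exact .inr ⟨_, hp.concat hbc hc⟩

namespace GraphOrientation

variable {V : Type*} {G : SimpleGraph V} (o o' : GraphOrientation G) {u v : V}

lemma adj_iff_dir_or_dir : G.Adj u v ↔ o.dir u v = true ∨ o.dir v u = true := by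
  refine ⟨fun h => ?_, ?_⟩
  · by_cases huv : o.dir u v = true
    · exact .inl huv
    · exact .inr ((o.exactly_one v u h.symm).2 huv)
  · rintro (h | h)
    exacts [o.dir_adj u v h, (o.dir_adj v u h).symm]

lemma not_dir_swap (h : o.dir u v = true) : ¬ o.dir v u = true :=
  (o.exactly_one u v (o.dir_adj u v h)).1 h

lemma two_mul_card_dir_eq_card_adj [DecidableEq V] [DecidableRel G.Adj] (S : Finset V) :
    2 * #{x ∈ S ×ˢ S | o.dir x.1 x.2 = true} = #{x ∈ S ×ˢ S | G.Adj x.1 x.2} := by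
  have hsplit : {x ∈ S ×ˢ S | G.Adj x.1 x.2}
      = {x ∈ S ×ˢ S | o.dir x.1 x.2 = true} ∪ {x ∈ S ×ˢ S | o.dir x.2 x.1 = true} := by
    rw [← filter_or]
    exact filter_congr fun x _ => o.adj_iff_dir_or_dir
  have hdisj : Disjoint {x ∈ S ×ˢ S | o.dir x.1 x.2 = true}
      {x ∈ S ×ˢ S | o.dir x.2 x.1 = true} :=
    disjoint_filter.2 fun _ _ => o.not_dir_swap
  have hswap :
      #{x ∈ S ×ˢ S | o.dir x.2 x.1 = true} = #{x ∈ S ×ˢ S | o.dir x.1 x.2 = true} :=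
    card_nbij' Prod.swap Prod.swap (fun x hx => by simp_all) (fun x hx => by simp_all)
      (fun x _ => rfl) (fun x _ => rfl)
  rw [hsplit, card_union_of_disjoint hdisj, hswap, two_mul]

lemma card_dir_eq (S : Finset V) :
    #{x ∈ S ×ˢ S | o.dir x.1 x.2 = true} = #{x ∈ S ×ˢ S | o'.dir x.1 x.2 = true} := by
  classical
  have h := o.two_mul_card_dir_eq_card_adj S
  rw [← o'.two_mul_card_dir_eq_card_adj S] at h
  omega

def IsOutClosed (S : Finset V) : Prop :=
  ∀ v ∈ S, ∀ w, o.dir v w = true → w ∈ S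

lemma sum_card_filter_dir (S : Finset V) :
    ∑ v ∈ S, #{w ∈ S | o.dir v w = true} = #{x ∈ S ×ˢ S | o.dir x.1 x.2 = true} := by
  rw [card_filter, sum_product]
  exact sum_congr rfl fun v _ => by rw [card_filter]

section Fintype

variable [Fintype V]

lemma outDeg_eq_card_filter_of_isOutClosed {S : Finset V} (hS : o.IsOutClosed S) (hv : v ∈ S) :
    o.outDeg v = #{w ∈ S | o.dir v w = true} := by
  refine congrArg card (ext fun w => ?_)
  simpa using fun h => hS v hv w h

lemma card_filter_dir_le_outDeg (S : Finset V) (v : V) :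
    #{w ∈ S | o.dir v w = true} ≤ o.outDeg v :=
  card_le_card (filter_subset_filter _ (subset_univ S))

lemma sum_outDeg_le_of_isOutClosed {S : Finset V} (hS : o.IsOutClosed S) :
    ∑ v ∈ S, o.outDeg v ≤ ∑ v ∈ S, o'.outDeg v :=
  calc ∑ v ∈ S, o.outDeg v
      = ∑ v ∈ S, #{w ∈ S | o.dir v w = true} :=
        sum_congr rfl fun _ hv => o.outDeg_eq_card_filter_of_isOutClosed hS hv
    _ = ∑ v ∈ S, #{w ∈ S | o'.dir v w = true} := by
        rw [sum_card_filter_dir, sum_card_filter_dir, card_dir_eq]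
    _ ≤ ∑ v ∈ S, o'.outDeg v := sum_le_sum fun v _ => o'.card_filter_dir_le_outDeg S v

lemma outDeg_le_maxOutDeg (v : V) : o.outDeg v ≤ o.maxOutDeg :=
  le_sup (mem_univ v)

lemma exists_outDeg_eq_maxOutDeg [Nonempty V] : ∃ m, o.outDeg m = o.maxOutDeg := by
  obtain ⟨m, -, hm⟩ := exists_mem_eq_sup univ univ_nonempty o.outDeg
  exact ⟨m, hm.symm⟩

lemma maxOutDeg_le_of_isOutClosed {S : Finset V} (hS : o.IsOutClosed S) {m : V} (hm : m ∈ S)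
    (hmax : o.outDeg m = o.maxOutDeg) (hlow : ∀ v ∈ S, o.maxOutDeg ≤ o.outDeg v + 1) :
    o.maxOutDeg ≤ o'.maxOutDeg := by
  have key : #S * o.maxOutDeg < #S * (o'.maxOutDeg + 1) :=
    calc #S * o.maxOutDeg
        = ∑ _v ∈ S, o.maxOutDeg := by rw [sum_const, smul_eq_mul]
      _ < ∑ v ∈ S, (o.outDeg v + 1) := sum_lt_sum hlow ⟨m, hm, by omega⟩
      _ ≤ ∑ v ∈ S, (o'.outDeg v + 1) := by
        rw [sum_add_distrib, sum_add_distrib]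
        exact Nat.add_le_add_right (o.sum_outDeg_le_of_isOutClosed o' hS) _
      _ ≤ ∑ _v ∈ S, (o'.maxOutDeg + 1) :=
        sum_le_sum fun v _ => Nat.add_le_add_right (o'.outDeg_le_maxOutDeg v) 1
      _ = #S * (o'.maxOutDeg + 1) := by rw [sum_const, smul_eq_mul]
  exact Nat.lt_add_one_iff.1 (lt_of_mul_lt_mul_left key (Nat.zero_le _))

end Fintype

end GraphOrientation

lemma Invariant2.maxOutDeg_le_outDeg_add_one {V : Type*} [Fintype V] {G : SimpleGraph V}
    {o : GraphOrientation G} (hinv : Invariant2 o) {m v : V} (hm : o.outDeg m = o.maxOutDeg)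
    (hmv : Relation.ReflTransGen (fun a b => o.dir a b = true) m v) :
    o.maxOutDeg ≤ o.outDeg v + 1 := by
  rcases exists_isPathFrom_of_reflTransGen hmv with rfl | ⟨p, hp⟩
  · omega
  · exact hm ▸ hinv p m v hp hm

theorem invariant2_optimal_general {V : Type*} [Fintype V]
    {G : SimpleGraph V} (o : GraphOrientation G) (hinv : Invariant2 o) :
    ∀ o' : GraphOrientation G, o.maxOutDeg ≤ o'.maxOutDeg := by
  classical
  intro o'
  rcases isEmpty_or_nonempty V with _ | _
  · simp [GraphOrientation.maxOutDeg]
  obtain ⟨m, hm⟩ := o.exists_outDeg_eq_maxOutDeg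
  let S : Finset V := {v | Relation.ReflTransGen (fun a b => o.dir a b = true) m v}
  have hS : o.IsOutClosed S := fun v hv w hw =>
    mem_filter.2 ⟨mem_univ w, (mem_filter.1 hv).2.tail hw⟩
  have hmS : m ∈ S := mem_filter.2 ⟨mem_univ m, .refl⟩
  refine o.maxOutDeg_le_of_isOutClosed o' hS hmS hm fun v hv => ?_
  exact hinv.maxOutDeg_le_outDeg_add_one hm (mem_filter.1 hv).2

/-- An orientation satisfying Invariant 2 (no improving path starting at a
vertex of maximum out-degree) has optimal maximum out-degree: every orientation of `G`
has maximum out-degree at least `Δ(Ḡ)`. -/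
theorem invariant2_optimal {V : Type*} [Fintype V] [DecidableEq V]
    {G : SimpleGraph V} (o : GraphOrientation G) (hinv : Invariant2 o) :
    ∀ o' : GraphOrientation G, o.maxOutDeg ≤ o'.maxOutDeg :=
  invariant2_optimal_general o hinv
end

section
/- Let Ḡ be an orientation of a finite undirected simple graph G=(V,E) satisfying Invariant 1, let {u,v} ∈ E be oriented from u to v in Ḡ, let G̃ be the orientation of G − {u,v} obtained from Ḡ by removing the directed edge (u,v), let P be an improving path in G̃ ending at u, let Ḡ' be the orientation obtained from G̃ by flipping P, and let P_f be the inverse (flipped) path of P in Ḡ'. Then every improving path in Ḡ' shares at least one vertex with P_f. -/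
open Finset

/-! If an improving path `q` of `Ḡ'` avoided `P`, no edge leaving a vertex of `q` would have been
touched by the flip, and none is the deleted edge `(u,v)` since `u ∈ P`. So `q` would be a directed
path of `Ḡ` whose endpoints have the same out-degrees in `Ḡ'` and in `Ḡ`, i.e. an improving path
of `Ḡ`, contradicting Invariant 1. -/

section Orientation

variable {V : Type*}

theorem flipDir_of_not_mem [DecidableEq V] (d : V → V → Bool) {p : List V} {a : V}
    (ha : a ∉ p) (b : V) : flipDir d p a b = d a b := by
  refine if_neg ?_
  rintro (h | h)
  · exact ha (List.of_mem_zip h).1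
  · exact ha (List.mem_of_mem_tail (List.of_mem_zip h).2)

theorem outDegF_congr [Fintype V] {d d' : V → V → Bool} {a : V} (h : ∀ b, d a b = d' a b) :
    outDegF d a = outDegF d' a := by
  simp only [outDegF, h]

theorem IsPathFrom.head_mem {G : SimpleGraph V} {o : GraphOrientation G} {p : List V} {a b : V}
    (hp : IsPathFrom o p a b) : a ∈ p :=
  List.mem_of_mem_head? hp.2.1

theorem IsPathFrom.last_mem {G : SimpleGraph V} {o : GraphOrientation G} {p : List V} {a b : V}
    (hp : IsPathFrom o p a b) : b ∈ p :=
  List.mem_of_mem_getLast? hp.2.2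

theorem IsPathFrom.mono_of_mem {G₁ G₂ : SimpleGraph V} {o₁ : GraphOrientation G₁}
    {o₂ : GraphOrientation G₂} {p : List V} {a b : V}
    (h : ∀ x ∈ p, ∀ y, o₁.dir x y = true → o₂.dir x y = true) (hp : IsPathFrom o₁ p a b) :
    IsPathFrom o₂ p a b :=
  ⟨⟨hp.1.1, hp.1.2.1, hp.1.2.2.imp_of_mem_imp fun x y hx _ => h x hx y⟩, hp.2⟩

end Orientation

theorem delete_flip_shares_vertex_general {V : Type*} [Fintype V] [DecidableEq V]
    {G : SimpleGraph V} (o : GraphOrientation G) (hinv : Invariant1 o)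
    (u v : V)
    (ot : GraphOrientation (delE G u v))
    (hot : ∀ a b, ot.dir a b = true ↔ (o.dir a b = true ∧ ¬ (a = u ∧ b = v)))
    (P : List V) (w : V) (hP : IsPathFrom ot P w u)
    (o' : GraphOrientation (delE G u v)) (ho' : o'.dir = flipDir ot.dir P) :
    ∀ q x y, IsPathFrom o' q x y → o'.outDeg y + 1 < o'.outDeg x →
      ∃ z, z ∈ q ∧ z ∈ P.reverse := by
  intro q x y hq himp
  by_contra! hdisj
  have hqP : ∀ a ∈ q, a ∉ P := fun a ha => by simpa using hdisj a ha
  have hdir : ∀ a ∈ q, ∀ b, o'.dir a b = ot.dir a b := fun a ha =>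
    ho' ▸ flipDir_of_not_mem ot.dir (hqP a ha)
  have hne : ∀ a ∈ q, a ≠ u := fun a ha hau => hqP a ha (hau ▸ hP.last_mem)
  have hqo : IsPathFrom o q x y := hq.mono_of_mem fun a ha b hab =>
    ((hot a b).1 (hdir a ha b ▸ hab)).1
  have hdeg : ∀ a ∈ q, o'.outDeg a = o.outDeg a := fun a ha =>
    (outDegF_congr (hdir a ha)).trans <|
      outDegF_congr fun b => Bool.eq_iff_iff.2 <| by simp [hot, hne a ha]
  have hle := hinv q x y hqo
  rw [hdeg x hq.head_mem, hdeg y hq.last_mem] at himp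
  omega

/-- After deleting the edge `{u,v}` (oriented from `u` to `v`) from an
Invariant-1 orientation and flipping an improving path `P` ending at `u`, every
improving path in the resulting orientation `Ḡ'` shares at least one vertex with the
inverse path `P_f` (the reversal of `P`). -/
theorem delete_flip_shares_vertex {V : Type*} [Fintype V] [DecidableEq V]
    {G : SimpleGraph V} (o : GraphOrientation G) (hinv : Invariant1 o)
    (u v : V) (hdir : o.dir u v = true)
    (ot : GraphOrientation (delE G u v))
    (hot : ∀ a b, ot.dir a b = true ↔ (o.dir a b = true ∧ ¬ (a = u ∧ b = v)))
    (P : List V) (w : V) (hP : IsPathFrom ot P w u)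
    (himp : ot.outDeg u + 1 < ot.outDeg w)
    (o' : GraphOrientation (delE G u v)) (ho' : o'.dir = flipDir ot.dir P) :
    ∀ q x y, IsPathFrom o' q x y → o'.outDeg y + 1 < o'.outDeg x →
      ∃ z, z ∈ q ∧ z ∈ P.reverse :=
  delete_flip_shares_vertex_general o hinv u v ot hot P w hP o' ho'
end

section
/- Let Ḡ be an orientation of a finite undirected simple graph G=(V,E) satisfying Invariant 1, let {u,v} ∈ E be oriented from u to v in Ḡ, let G̃ be the orientation of G − {u,v} obtained from Ḡ by removing the directed edge (u,v), and let P be an improving path in G̃ ending at u. Then the orientation Ḡ' obtained from G̃ by flipping P contains no improving path; that is, Ḡ' satisfies Invariant 1. -/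
/-!
Deleting `(u, v)` lowers `odeg u` by one. Since `P` is also a path of `Ḡ`, Invariant 1 for `Ḡ`
forces `odeg w = odeg u + 1`; flipping `P` then gives `w` the out-degree `odeg u`, while every
other vertex gets back its out-degree in `Ḡ`.

Let `Q` be a path of `Ḡ'` from `a` to `b`. Flipped edges lie on `P`, so an edge of `Q` with an
endpoint off `P` is an edge of `Ḡ`. If `Q` avoids `P` it is a path of `Ḡ`. Otherwise `Q` up to its
first vertex on `P`, followed by the rest of `P`, is a path of `Ḡ` from `a` to `u`, and `P` up to
the last vertex of `Q` on `P`, followed by the rest of `Q`, is a path of `Ḡ` from `w` to `b`.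
Invariant 1 for `Ḡ` bounds `odeg' a ≤ odeg u + 1` and `odeg u ≤ odeg' b`.
-/

open Finset

namespace List

variable {α : Type*}

theorem map_fst_zip_tail : ∀ l : List α, (l.zip l.tail).map Prod.fst = l.dropLast
  | [] => rfl
  | [_] => rfl
  | a :: b :: t => by simpa using map_fst_zip_tail (b :: t)

theorem map_snd_zip_tail (l : List α) : (l.zip l.tail).map Prod.snd = l.tail :=
  map_snd_zip (by simp)

theorem mem_of_mem_zip_tail {l : List α} {a b : α} (h : (a, b) ∈ l.zip l.tail) : a ∈ l ∧ b ∈ l :=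
  ⟨(of_mem_zip h).1, mem_of_mem_tail (of_mem_zip h).2⟩

theorem IsChain.rel_of_mem_zip_tail {R : α → α → Prop} :
    ∀ {l : List α}, IsChain R l → ∀ {a b : α}, (a, b) ∈ l.zip l.tail → R a b
  | _ :: _ :: _, h, _, _, hab => by
    rw [isChain_cons_cons] at h
    simp only [tail_cons, zip_cons_cons, mem_cons, Prod.mk.injEq] at hab
    rcases hab with ⟨rfl, rfl⟩ | hab
    · exact h.1
    · exact h.2.rel_of_mem_zip_tail hab

theorem Nodup.mem_tail_iff {l : List α} (h : l.Nodup) {x : α} :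
    x ∈ l.tail ↔ x ∈ l ∧ l.head? ≠ some x := by
  cases l with
  | nil => simp
  | cons a t =>
    have := (nodup_cons.1 h).1
    simp only [tail_cons, mem_cons, head?_cons, ne_eq, Option.some.injEq]
    grind

theorem Nodup.mem_dropLast_iff {l : List α} (h : l.Nodup) {x : α} :
    x ∈ l.dropLast ↔ x ∈ l ∧ l.getLast? ≠ some x := by
  simpa using (nodup_reverse.2 h).mem_tail_iff (x := x)

section Card

variable {β : Type*} [DecidableEq α] [DecidableEq β] [Fintype β]

theorem card_filter_mem_left {L : List (α × β)} (h : (L.map Prod.fst).Nodup) (x : α) :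
    #{y | (x, y) ∈ L} = if x ∈ L.map Prod.fst then 1 else 0 := by
  split_ifs with hx
  · obtain ⟨⟨x, y⟩, hxy, rfl⟩ := mem_map.1 hx
    rw [card_eq_one]
    refine ⟨y, Finset.ext fun z => ?_⟩
    simp only [Finset.mem_filter, Finset.mem_univ, true_and, Finset.mem_singleton]
    exact ⟨fun hz => (Prod.ext_iff.1 (inj_on_of_nodup_map h hz hxy rfl)).2,
      by rintro rfl; exact hxy⟩
  · rw [card_eq_zero, filter_eq_empty_iff]
    exact fun y _ hy => hx (mem_map.2 ⟨_, hy, rfl⟩)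

theorem card_filter_mem_right {L : List (β × α)} (h : (L.map Prod.snd).Nodup) (x : α) :
    #{y | (y, x) ∈ L} = if x ∈ L.map Prod.snd then 1 else 0 := by
  simpa using card_filter_mem_left (L := L.map Prod.swap) (by simpa [Function.comp_def] using h) x

end Card

section Splice

variable {R R' : α → α → Prop} {P Q : List α}

/-- Follow `Q` up to its first vertex on `P`, then follow `P`. -/
theorem exists_isChain_splice (hP : P.Nodup) (hPc : P.IsChain R) (hQ : Q.Nodup)
    (hQc : Q.IsChain R') (hR : ∀ a b, a ∉ P → R' a b → R a b) (hmeet : ∃ x ∈ Q, x ∈ P) :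
    ∃ l : List α, l.Nodup ∧ l.IsChain R ∧ l.head? = Q.head? ∧ l.getLast? = P.getLast? := by
  classical
  obtain ⟨x₀, hx₀Q, hx₀P⟩ := hmeet
  obtain ⟨x, Q₁, Q₂, hQ₁, hxP, rfl, -⟩ := exists_of_eraseP (p := fun y => decide (y ∈ P)) hx₀Q
    (by simpa using hx₀P)
  simp only [decide_eq_true_eq] at hQ₁ hxP
  obtain ⟨P₁, P₂, rfl⟩ := append_of_mem hxP
  refine ⟨Q₁ ++ x :: P₂, ?_, ?_, ?_, ?_⟩
  · refine nodup_append.2 ⟨hQ.sublist (sublist_append_left _ _),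
      hP.sublist (sublist_append_right _ _), ?_⟩
    rintro a ha _ hb rfl
    exact hQ₁ a ha (mem_append_right _ hb)
  · have h₁ : (Q₁ ++ [x]).IsChain R := by
      have := hQc.prefix (l₁ := Q₁ ++ [x]) ⟨Q₂, by simp⟩
      rw [isChain_append] at this ⊢
      refine ⟨this.1.imp_of_mem_imp fun a _ ha _ => hR a _ (hQ₁ a ha), isChain_singleton x,
        fun a ha b hb => hR a b (hQ₁ a (mem_of_mem_getLast? ha)) (this.2.2 a ha b hb)⟩
    simpa using h₁.append_overlap (hPc.right_of_append (l₁ := P₁)) (cons_ne_nil x [])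
  · cases Q₁ <;> simp
  · simp only [getLast?_append_of_ne_nil _ (cons_ne_nil _ _)]

/-- Follow `P` up to its last vertex on `Q`, then follow `Q`. -/
theorem exists_isChain_splice_rev (hP : P.Nodup) (hPc : P.IsChain R) (hQ : Q.Nodup)
    (hQc : Q.IsChain R') (hR : ∀ a b, b ∉ P → R' a b → R a b) (hmeet : ∃ x ∈ Q, x ∈ P) :
    ∃ l : List α, l.Nodup ∧ l.IsChain R ∧ l.head? = P.head? ∧ l.getLast? = Q.getLast? := by
  obtain ⟨l, hnd, hc, hh, hl⟩ := exists_isChain_splice (R := fun a b => R b a)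
    (R' := fun a b => R' b a) (nodup_reverse.2 hP) (isChain_reverse.2 hPc)
    (nodup_reverse.2 hQ) (isChain_reverse.2 hQc) (fun a b ha => hR b a (by simpa using ha))
    (by simpa using hmeet)
  exact ⟨l.reverse, nodup_reverse.2 hnd, isChain_reverse.2 hc, by simpa using hl,
    by simpa using hh⟩

end Splice

end List

section FlipPath

variable {V : Type*} [DecidableEq V] {d : V → V → Bool} {P : List V}

theorem flipDir_of_not_mem_s12 {a b : V} (h : a ∉ P ∨ b ∉ P) : flipDir d P a b = d a b := by
  unfold flipDir
  rw [if_neg]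
  rintro (hab | hab) <;> have := List.mem_of_mem_zip_tail hab <;> tauto

theorem flipDir_eq_true_iff (hch : P.IsChain (fun a b => d a b = true))
    (hasymm : ∀ a b, d a b = true → ¬ d b a = true) {a b : V} :
    flipDir d P a b = true ↔ d a b = true ∧ (a, b) ∉ P.zip P.tail ∨ (b, a) ∈ P.zip P.tail := by
  unfold flipDir
  have hab : (a, b) ∈ P.zip P.tail → d a b = true := hch.rel_of_mem_zip_tail
  have hba : (b, a) ∈ P.zip P.tail → d b a = true := hch.rel_of_mem_zip_tail
  have := hasymm a b
  split_ifs <;> tauto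

variable [Fintype V]

/-- Along a flipped path each vertex loses the edge to its successor and gains the edge to
its predecessor. -/
theorem outDegF_flipDir_add (hnd : P.Nodup) (hch : P.IsChain (fun a b => d a b = true))
    (hasymm : ∀ a b, d a b = true → ¬ d b a = true) (x : V) :
    outDegF (flipDir d P) x + (if x ∈ P.dropLast then 1 else 0)
      = outDegF d x + (if x ∈ P.tail then 1 else 0) := by
  have hfst : ((P.zip P.tail).map Prod.fst).Nodup := by
    rw [List.map_fst_zip_tail]; exact hnd.sublist (List.dropLast_sublist P)
  have hsnd : ((P.zip P.tail).map Prod.snd).Nodup := by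
    rw [List.map_snd_zip_tail]; exact hnd.tail
  have hS := List.card_filter_mem_left hfst x
  have hT := List.card_filter_mem_right hsnd x
  rw [List.map_fst_zip_tail] at hS
  rw [List.map_snd_zip_tail] at hT
  have hxy : ∀ {y}, (x, y) ∈ P.zip P.tail → d x y = true := hch.rel_of_mem_zip_tail
  have hyx : ∀ {y}, (y, x) ∈ P.zip P.tail → d y x = true := hch.rel_of_mem_zip_tail
  rw [← hS, ← hT, outDegF, outDegF, ← card_union_of_disjoint, ← card_union_of_disjoint]
  · congr 1
    ext y
    simp only [Finset.mem_union, Finset.mem_filter, Finset.mem_univ, true_and,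
      flipDir_eq_true_iff hch hasymm]
    have := @hxy y
    tauto
  · refine disjoint_filter.2 fun y _ hy hyx' => hasymm y x (hyx hyx') hy
  · refine disjoint_filter.2 fun y _ hy hxy' => ?_
    rw [flipDir_eq_true_iff hch hasymm] at hy
    have := hasymm x y (hxy hxy')
    tauto

end FlipPath

theorem outDegF_add_ite_of_erase {V : Type*} [Fintype V] [DecidableEq V] {d d' : V → V → Bool}
    {u v : V} (h : ∀ a b, d' a b = true ↔ d a b = true ∧ ¬ (a = u ∧ b = v))
    (huv : d u v = true) (x : V) :
    outDegF d' x + (if x = u then 1 else 0) = outDegF d x := by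
  unfold outDegF
  split_ifs with hx
  · subst hx
    have hset : ({y | d' x y = true} : Finset V) = ({y | d x y = true} : Finset V).erase v := by
      ext y
      simp only [Finset.mem_filter, Finset.mem_univ, true_and, Finset.mem_erase, h]
      tauto
    rw [hset, card_erase_add_one (by simpa using huv)]
  · rw [add_zero]
    congr 1
    ext y
    simp [h, hx]

section Orientation

variable {V : Type*} {G H : SimpleGraph V}

theorem GraphOrientation.dir_asymm (o : GraphOrientation G) (a b : V) (h : o.dir a b = true) :
    ¬ o.dir b a = true :=
  (o.exactly_one a b (o.dir_adj a b h)).1 h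

theorem IsPathFrom.mono {o₁ : GraphOrientation G} {o₂ : GraphOrientation H}
    (h : ∀ a b, o₁.dir a b = true → o₂.dir a b = true) {p : List V} {a b : V}
    (hp : IsPathFrom o₁ p a b) : IsPathFrom o₂ p a b :=
  ⟨⟨hp.1.1, hp.1.2.1, hp.1.2.2.imp fun a b => h a b⟩, hp.2⟩

theorem IsPathFrom.ne {o : GraphOrientation G} {p : List V} {a b : V}
    (hp : IsPathFrom o p a b) : a ≠ b := by
  obtain ⟨⟨hnd, hlen, -⟩, ha, hb⟩ := hp
  rcases p with _ | ⟨c, _ | ⟨d, t⟩⟩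
  · simp at hlen
  · simp at hlen
  · rintro rfl
    simp only [List.head?_cons, Option.some.injEq, List.getLast?_cons_cons] at ha hb
    exact (List.nodup_cons.1 hnd).1 (ha ▸ List.mem_of_getLast? hb)

theorem Invariant1.outDeg_le_of_isChain [Fintype V] {o : GraphOrientation G} (h : Invariant1 o)
    {l : List V} (hnd : l.Nodup) (hc : l.IsChain fun a b => o.dir a b = true) {a b : V}
    (ha : l.head? = some a) (hb : l.getLast? = some b) : o.outDeg a ≤ o.outDeg b + 1 := by
  rcases l with _ | ⟨c, _ | ⟨d, t⟩⟩
  · simp at ha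
  · simp only [List.head?_cons, Option.some.injEq, List.getLast?_singleton] at ha hb
    subst ha hb
    omega
  · exact h _ a b ⟨⟨hnd, by simp, hc⟩, ha, hb⟩

end Orientation

theorem outDeg_delE_flipDir_add_ite {V : Type*} [Fintype V] [DecidableEq V] {G : SimpleGraph V}
    {o : GraphOrientation G} {u v : V} {ot o' : GraphOrientation (delE G u v)}
    (hot : ∀ a b, ot.dir a b = true ↔ (o.dir a b = true ∧ ¬ (a = u ∧ b = v)))
    (hdir : o.dir u v = true) {P : List V} {w : V} (hP : IsPathFrom ot P w u)
    (ho' : o'.dir = flipDir ot.dir P) (x : V) :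
    o'.outDeg x + (if x = w then 1 else 0) = o.outDeg x := by
  have hwu := hP.ne
  obtain ⟨⟨hnd, -, hch⟩, hw, hu⟩ := hP
  have hflip := outDegF_flipDir_add hnd hch ot.dir_asymm x
  have hdel := outDegF_add_ite_of_erase hot hdir x
  simp only [hnd.mem_dropLast_iff, hnd.mem_tail_iff, hu, hw, ne_eq, Option.some.injEq] at hflip
  have hwP := List.mem_of_head? hw
  have huP := List.mem_of_getLast? hu
  unfold GraphOrientation.outDeg
  rw [ho']
  by_cases hxP : x ∈ P <;> split_ifs at hflip hdel ⊢ <;> subst_vars <;> simp_all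

/-- After deleting the edge `{u,v}` (oriented from `u` to `v`) from an
Invariant-1 orientation and flipping an improving path `P` ending at `u`, the
resulting orientation `Ḡ'` contains no improving path, i.e. satisfies Invariant 1. -/
theorem delete_flip_invariant1 {V : Type*} [Fintype V] [DecidableEq V]
    {G : SimpleGraph V} (o : GraphOrientation G) (hinv : Invariant1 o)
    (u v : V) (hdir : o.dir u v = true)
    (ot : GraphOrientation (delE G u v))
    (hot : ∀ a b, ot.dir a b = true ↔ (o.dir a b = true ∧ ¬ (a = u ∧ b = v)))
    (P : List V) (w : V) (hP : IsPathFrom ot P w u)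
    (himp : ot.outDeg u + 1 < ot.outDeg w)
    (o' : GraphOrientation (delE G u v)) (ho' : o'.dir = flipDir ot.dir P) :
    Invariant1 o' := by
  have hsub : ∀ a b, ot.dir a b = true → o.dir a b = true := fun a b h => ((hot a b).1 h).1
  have hdeg := outDeg_delE_flipDir_add_ite hot hdir hP ho'
  have hw_deg : o.outDeg w = o.outDeg u + 1 := by
    have hle := hinv P w u (hP.mono hsub)
    have hdel_w := outDegF_add_ite_of_erase hot hdir w
    have hdel_u := outDegF_add_ite_of_erase hot hdir u
    simp only [hP.ne, if_true, if_false] at hdel_w hdel_u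
    unfold GraphOrientation.outDeg at *
    omega
  have hkeep : ∀ a b, o'.dir a b = true → a ∉ P ∨ b ∉ P → o.dir a b = true := fun a b h hab =>
    hsub a b (by rwa [ho', flipDir_of_not_mem_s12 hab] at h)
  rintro Q a b ⟨⟨hQnd, -, hQc⟩, ha, hb⟩
  obtain ⟨⟨hPnd, -, hPc⟩, hPw, hPu⟩ := hP.mono hsub
  have hdeg_a := hdeg a
  have hdeg_b := hdeg b
  by_cases hmeet : ∃ x ∈ Q, x ∈ P
  · obtain ⟨l₁, hnd₁, hc₁, hh₁, hl₁⟩ := List.exists_isChain_splice hPnd hPc hQnd hQc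
      (fun a b ha h => hkeep a b h (.inl ha)) hmeet
    obtain ⟨l₂, hnd₂, hc₂, hh₂, hl₂⟩ := List.exists_isChain_splice_rev hPnd hPc hQnd hQc
      (fun a b hb h => hkeep a b h (.inr hb)) hmeet
    have hau := hinv.outDeg_le_of_isChain hnd₁ hc₁ (hh₁.trans ha) (hl₁.trans hPu)
    have hwb := hinv.outDeg_le_of_isChain hnd₂ hc₂ (hh₂.trans hPw) (hl₂.trans hb)
    split_ifs at hdeg_a hdeg_b <;> subst_vars <;> omega
  · push Not at hmeet
    have hab := hinv.outDeg_le_of_isChain hQnd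
      (hQc.imp_of_mem_imp fun c d hc _ h => hkeep c d h (.inl (hmeet c hc))) ha hb
    have hwP := List.mem_of_head? hPw
    have haw : a ≠ w := by rintro rfl; exact hmeet a (List.mem_of_head? ha) hwP
    have hbw : b ≠ w := by rintro rfl; exact hmeet b (List.mem_of_getLast? hb) hwP
    simp only [haw, hbw, if_false, add_zero] at hdeg_a hdeg_b
    omega
end

section
/- Let Ḡ be an orientation of a finite undirected simple graph G=(V,E) containing no improving path from a peak vertex to a sink vertex, let {u,v} ∉ E with odeg(u,Ḡ) ≤ odeg(v,Ḡ), and let G̃ be the orientation of G + {u,v} obtained from Ḡ by adding the directed edge (u,v). If G̃ contains an improving path from a peak vertex of G̃ to a sink vertex of G̃, then G̃ contains such an improving path starting at u. In particular, inserting one edge creates at most one new source of improving peak-to-sink paths, namely u. -/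
open Finset

/-!
If the peak `a` of an improving peak-to-sink path of `G̃` is not `u`, then `a` keeps its
out-degree and, since out-degrees only grow, `Δ(G̃) = Δ(Ḡ)`. A path avoiding the new edge
`(u,v)` would be an improving peak-to-sink path of `Ḡ`. Otherwise its part from `a` to `u`
lies in `Ḡ`, so `odeg(u, Ḡ) ≥ Δ - 1`; the extra out-edge makes `u` a peak of `G̃`, and the
part of the path from `u` onwards is the required path.
-/

open List

namespace GraphOrientation

variable {V : Type*} {G : SimpleGraph V}

theorem outDeg_le_maxOutDeg_s18 [Fintype V] (o : GraphOrientation G) (w : V) :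
    o.outDeg w ≤ o.maxOutDeg :=
  Finset.le_sup (Finset.mem_univ w)

section AddEdge

variable {o : GraphOrientation G} {u v : V} {ot : GraphOrientation (addE G u v)}

theorem outDeg_addE_self [Fintype V]
    (hot : ∀ a b, ot.dir a b = true ↔ (o.dir a b = true ∨ (a = u ∧ b = v)))
    (hE : ¬ G.Adj u v) : ot.outDeg u = o.outDeg u + 1 := by
  classical
  have hv : v ∉ Finset.univ.filter fun w => o.dir u w = true := by
    simpa using fun h => hE (o.dir_adj u v h)
  have hfilter : (Finset.univ.filter fun w => ot.dir u w = true)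
      = insert v (Finset.univ.filter fun w => o.dir u w = true) := by
    ext w
    simp only [Finset.mem_filter, Finset.mem_univ, true_and, Finset.mem_insert, hot]
    tauto
  rw [outDeg, outDegF, hfilter, Finset.card_insert_of_notMem hv]
  rfl

theorem outDeg_addE_of_ne [Fintype V]
    (hot : ∀ a b, ot.dir a b = true ↔ (o.dir a b = true ∨ (a = u ∧ b = v)))
    {w : V} (hw : w ≠ u) : ot.outDeg w = o.outDeg w := by
  unfold outDeg outDegF
  congr 1
  ext x
  simp only [Finset.mem_filter, Finset.mem_univ, true_and, hot]
  tauto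

theorem outDeg_le_outDeg_addE [Fintype V]
    (hot : ∀ a b, ot.dir a b = true ↔ (o.dir a b = true ∨ (a = u ∧ b = v)))
    (hE : ¬ G.Adj u v) (w : V) : o.outDeg w ≤ ot.outDeg w := by
  by_cases hw : w = u
  · rw [hw, outDeg_addE_self hot hE]
    exact Nat.le_succ _
  · exact (outDeg_addE_of_ne hot hw).ge

theorem maxOutDeg_addE_of_peak_ne [Fintype V]
    (hot : ∀ a b, ot.dir a b = true ↔ (o.dir a b = true ∨ (a = u ∧ b = v)))
    (hE : ¬ G.Adj u v) {a : V} (ha : a ≠ u) (hpeak : ot.outDeg a = ot.maxOutDeg) :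
    ot.maxOutDeg = o.maxOutDeg := by
  refine le_antisymm ?_ (Finset.sup_le fun w _ =>
    (outDeg_le_outDeg_addE hot hE w).trans (ot.outDeg_le_maxOutDeg_s18 w))
  rw [← hpeak, outDeg_addE_of_ne hot ha]
  exact o.outDeg_le_maxOutDeg_s18 a

theorem isChain_dir_of_notMem_addE
    (hot : ∀ a b, ot.dir a b = true ↔ (o.dir a b = true ∨ (a = u ∧ b = v)))
    {l : List V} (hv : v ∉ l) (hl : IsChain (fun a b => ot.dir a b = true) l) :
    IsChain (fun a b => o.dir a b = true) l :=
  hl.imp_of_mem_imp fun _ b _ hb hab => ((hot _ b).1 hab).resolve_right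
    fun ⟨_, hbv⟩ => hv (hbv ▸ hb)

theorem isChain_dir_of_forall_ne_addE
    (hot : ∀ a b, ot.dir a b = true ↔ (o.dir a b = true ∨ (a = u ∧ b = v)))
    {l : List V} (hsplit : ∀ l₁ l₂, l ≠ l₁ ++ u :: v :: l₂)
    (hl : IsChain (fun a b => ot.dir a b = true) l) :
    IsChain (fun a b => o.dir a b = true) l :=
  isChain_iff_forall_rel_of_append_cons_cons.2 fun _ _ l₁ l₂ heq =>
    ((hot _ _).1 (isChain_iff_forall_rel_of_append_cons_cons.1 hl heq)).resolve_right
      fun ⟨hau, hbv⟩ => hsplit l₁ l₂ (hau ▸ hbv ▸ heq)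

theorem IsPathFrom.of_addE
    (hot : ∀ a b, ot.dir a b = true ↔ (o.dir a b = true ∨ (a = u ∧ b = v)))
    {p : List V} {a b : V} (hp : IsPathFrom ot p a b) (ha : a ≠ u) :
    IsPathFrom o p a b ∨ (∃ q, IsPathFrom o q a u) ∧ ∃ q, IsPathFrom ot q u b := by
  obtain ⟨⟨hnodup, hlen, hchain⟩, hhead, hlast⟩ := hp
  by_cases hsplit : ∃ l₁ l₂, p = l₁ ++ u :: v :: l₂
  swap
  · simp only [not_exists] at hsplit
    exact .inl ⟨⟨hnodup, hlen, isChain_dir_of_forall_ne_addE hot hsplit hchain⟩, hhead, hlast⟩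
  obtain ⟨l₁, l₂, rfl⟩ := hsplit
  have hl₁ : l₁ ≠ [] := by
    rintro rfl
    exact ha (Option.some_injective _ hhead).symm
  have hchain' := isChain_append_cons_cons.1 hchain
  have hv : v ∉ l₁ ++ [u] := by
    have hnodup' : (l₁ ++ [u] ++ v :: l₂).Nodup := by simpa using hnodup
    exact fun h => (nodup_append.1 hnodup').2.2 v h v mem_cons_self rfl
  refine .inr ⟨⟨l₁ ++ [u], ⟨?_, ?_, ?_⟩, ?_, getLast?_concat⟩, u :: v :: l₂, ⟨?_, ?_, ?_⟩, rfl, ?_⟩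
  · exact hnodup.sublist ((List.singleton_sublist.2 (by simp)).append_left l₁)
  · obtain ⟨c, cs, rfl⟩ := List.exists_cons_of_ne_nil hl₁
    simp
  · exact isChain_dir_of_notMem_addE hot hv hchain'.1
  · rwa [head?_append_of_ne_nil _ hl₁] at hhead ⊢
  · exact hnodup.of_append_right
  · simp
  · exact isChain_cons_cons.2 ⟨hchain'.2.1, hchain'.2.2⟩
  · rwa [getLast?_append_of_ne_nil _ (by simp)] at hlast

end AddEdge

end GraphOrientation

open GraphOrientation in
theorem insert_at_most_one_new_peak_source_general {V : Type*} [Fintype V]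
    {G : SimpleGraph V} (o : GraphOrientation G)
    (hps : ¬ ∃ p a b, IsPathFrom o p a b ∧ o.outDeg a = o.maxOutDeg ∧
      o.outDeg b + 1 < o.maxOutDeg)
    (u v : V) (hE : ¬ G.Adj u v)
    (ot : GraphOrientation (addE G u v))
    (hot : ∀ a b, ot.dir a b = true ↔ (o.dir a b = true ∨ (a = u ∧ b = v)))
    (hex : ∃ p a b, IsPathFrom ot p a b ∧ ot.outDeg a = ot.maxOutDeg ∧
      ot.outDeg b + 1 < ot.maxOutDeg) :
    ∃ p b, IsPathFrom ot p u b ∧ ot.outDeg u = ot.maxOutDeg ∧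
      ot.outDeg b + 1 < ot.maxOutDeg := by
  obtain ⟨p, a, b, hp, hpeak, hsink⟩ := hex
  by_cases ha : a = u
  · exact ⟨p, b, ha ▸ hp, ha ▸ hpeak, hsink⟩
  have hΔ := maxOutDeg_addE_of_peak_ne hot hE ha hpeak
  have hpeak_o : o.outDeg a = o.maxOutDeg := by
    rw [← outDeg_addE_of_ne hot ha, hpeak, hΔ]
  rcases hp.of_addE hot ha with hp_o | ⟨⟨q, hq⟩, q', hq'⟩
  · have := outDeg_le_outDeg_addE hot hE b
    exact absurd ⟨p, a, b, hp_o, hpeak_o, by omega⟩ hps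
  · have hu : o.maxOutDeg ≤ o.outDeg u + 1 :=
      not_lt.1 fun h => hps ⟨q, a, u, hq, hpeak_o, h⟩
    have := outDeg_addE_self hot hE
    have := ot.outDeg_le_maxOutDeg_s18 u
    exact ⟨q', b, hq', by omega, hsink⟩

/-- Let `Ḡ` contain no improving path from a peak vertex (out-degree
`Δ(Ḡ)`) to a sink vertex (out-degree `< Δ(Ḡ) − 1`), insert `{u,v} ∉ E` with
`odeg(u) ≤ odeg(v)` directed as `(u,v)`, obtaining `G̃`. If `G̃` contains an improving
path from a peak vertex of `G̃` to a sink vertex of `G̃`, then it contains such a path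
starting at `u`: the insertion creates at most one new source `u` of improving
peak-to-sink paths. -/
theorem insert_at_most_one_new_peak_source {V : Type*} [Fintype V] [DecidableEq V]
    {G : SimpleGraph V} (o : GraphOrientation G)
    (hps : ¬ ∃ p a b, IsPathFrom o p a b ∧ o.outDeg a = o.maxOutDeg ∧
      o.outDeg b + 1 < o.maxOutDeg)
    (u v : V) (hne : u ≠ v) (hE : ¬ G.Adj u v) (hdeg : o.outDeg u ≤ o.outDeg v)
    (ot : GraphOrientation (addE G u v))
    (hot : ∀ a b, ot.dir a b = true ↔ (o.dir a b = true ∨ (a = u ∧ b = v)))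
    (hex : ∃ p a b, IsPathFrom ot p a b ∧ ot.outDeg a = ot.maxOutDeg ∧
      ot.outDeg b + 1 < ot.maxOutDeg) :
    ∃ p b, IsPathFrom ot p u b ∧ ot.outDeg u = ot.maxOutDeg ∧
      ot.outDeg b + 1 < ot.maxOutDeg :=
  insert_at_most_one_new_peak_source_general o hps u v hE ot hot hex
end
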